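/- arXiv:1111.4629 — 8 statements merged into one kernel-verified Lean document; each statement's English description precedes it below -/
import Mathlib

section
/- If X is a bounded connected subset of ℂ, then realm(X) = fill(closure(X)) is connected. -/
open Bornology Set

/-- The *filling* of a set `X ⊆ ℂ`: the union of `X` with all bounded connected
components of `ℂ \ X`. -/
def fill (X : Set ℂ) : Set ℂ :=
  {z : ℂ | Bornology.IsBounded (connectedComponentIn Xᶜ z)}

/-- `realm X` is the filling of the closure of `X`. -/
def realm (X : Set ℂ) : Set ℂ := fill (closure X)

lemma bounded_ne_univ (C : Set ℂ) (hC : IsBounded C) : C ≠ univ := by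
  intro h
  rw [h, isBounded_univ] at hC
  exact (Filter.NeBot.ne (NormedSpace.cobounded_neBot ℝ ℂ))
    (Bornology.cobounded_eq_bot_iff.mpr hC)

/-- A nonempty bounded component of the complement of a closed set `K` touches `K`. -/
lemma touches (K : Set ℂ) (hK : IsClosed K) {z : ℂ} (hz : z ∈ Kᶜ)
    (hb : IsBounded (connectedComponentIn Kᶜ z)) :
    ∃ x ∈ K, x ∈ closure (connectedComponentIn Kᶜ z) := by
  set C := connectedComponentIn Kᶜ z with hCdef
  have hCopen : IsOpen C := hK.isOpen_compl.connectedComponentIn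
  have hzC : z ∈ C := mem_connectedComponentIn hz
  -- C is not closed, else clopen nonempty bounded = univ, contradiction
  have : ¬ IsClosed C := by
    intro hCl
    rcases isClopen_iff.mp ⟨hCl, hCopen⟩ with h | h
    · exact absurd h (Set.nonempty_iff_ne_empty.mp ⟨z, hzC⟩)
    · exact bounded_ne_univ C hb h
  have : ¬ (closure C ⊆ C) := fun h => absurd (closure_subset_iff_isClosed.mp h) this
  obtain ⟨x, hxcl, hxC⟩ := Set.not_subset.mp this
  refine ⟨x, ?_, hxcl⟩
  by_contra hxK
  -- x ∈ Kᶜ, so its component is an open set meeting C, hence equals C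
  have hx : x ∈ Kᶜ := hxK
  have hopen : IsOpen (connectedComponentIn Kᶜ x) := hK.isOpen_compl.connectedComponentIn
  obtain ⟨y, hy1, hy2⟩ := mem_closure_iff.mp hxcl _ hopen (mem_connectedComponentIn hx)
  have : connectedComponentIn Kᶜ x = C := by
    rw [connectedComponentIn_eq hy1, hCdef, connectedComponentIn_eq hy2]
  exact hxC (this ▸ mem_connectedComponentIn hx)

/-- If `X` is a bounded connected subset of `ℂ`, then `realm X = fill (closure X)`
is connected. -/
theorem realm_isConnected (X : Set ℂ) (hXb : Bornology.IsBounded X)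
    (hXc : IsConnected X) : IsConnected (realm X) := by
  set K := closure X with hKdef
  have hKcl : IsClosed K := isClosed_closure
  have hKpre : IsPreconnected K := hXc.isPreconnected.closure
  obtain ⟨x0, hx0⟩ := hXc.nonempty
  have hx0K : x0 ∈ K := subset_closure hx0
  have hKsub : K ⊆ realm X := by
    intro z hz
    show IsBounded (connectedComponentIn Kᶜ z)
    rw [connectedComponentIn_eq_empty (by simpa using hz)]
    exact Bornology.isBounded_empty
  have key : realm X = ⋃ z ∈ realm X, (connectedComponentIn Kᶜ z ∪ K) := by
    apply Set.Subset.antisymm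
    · intro z hz
      refine Set.mem_biUnion hz ?_
      by_cases hzK : z ∈ K
      · exact Or.inr hzK
      · exact Or.inl (mem_connectedComponentIn hzK)
    · refine Set.iUnion₂_subset fun z hz => Set.union_subset ?_ hKsub
      intro w hw
      show IsBounded (connectedComponentIn Kᶜ w)
      rw [← connectedComponentIn_eq hw]
      exact hz
  constructor
  · exact ⟨x0, hKsub hx0K⟩
  · rw [key]
    have : (⋃ z ∈ realm X, (connectedComponentIn Kᶜ z ∪ K))
        = ⋃₀ ((fun z => connectedComponentIn Kᶜ z ∪ K) '' (realm X)) := by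
      rw [Set.sUnion_image]
    rw [this]
    apply isPreconnected_sUnion x0
    · rintro s ⟨z, hz, rfl⟩
      exact Or.inr hx0K
    · rintro s ⟨z, hz, rfl⟩
      show IsPreconnected (connectedComponentIn Kᶜ z ∪ K)
      by_cases hzK : z ∈ K
      · rw [connectedComponentIn_eq_empty (by simpa using hzK), Set.empty_union]
        exact hKpre
      · -- bounded component C with closure touching K
        obtain ⟨x, hxK, hxcl⟩ := touches K hKcl hzK hz
        have hCpre : IsPreconnected (connectedComponentIn Kᶜ z) :=
          isPreconnected_connectedComponentIn
        have hCx : IsPreconnected (insert x (connectedComponentIn Kᶜ z)) :=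
          hCpre.subset_closure (Set.subset_insert _ _)
            (Set.insert_subset hxcl subset_closure)
        have := hCx.union x (Set.mem_insert _ _) hxK hKpre
        have heq : insert x (connectedComponentIn Kᶜ z) ∪ K
            = connectedComponentIn Kᶜ z ∪ K := by
          rw [Set.insert_union]
          exact Set.insert_eq_of_mem (Set.mem_union_right _ hxK)
        rwa [heq] at this
end

section
/- Every connected component of a full bounded subset of ℂ is itself full (and bounded). -/
open Set Bornology

/-- Every connected component of a full bounded subset of `ℂ` is itself full
(and bounded). -/
theorem component_of_full_is_full (X : Set ℂ) (hXb : Bornology.IsBounded X)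
    (hXfull : fill X = X) (C : Set ℂ)
    (hC : ∃ z ∈ X, C = connectedComponentIn X z) :
    fill C = C ∧ Bornology.IsBounded C := by
  obtain ⟨z, hzX, rfl⟩ := hC
  set C := connectedComponentIn X z with hCdef
  have hCX : C ⊆ X := connectedComponentIn_subset _ _
  have hzC : z ∈ C := mem_connectedComponentIn hzX
  have hCconn : IsPreconnected C := isPreconnected_connectedComponentIn
  refine ⟨Set.Subset.antisymm ?_ ?_, hXb.subset hCX⟩
  · -- fill C ⊆ C
    intro w hw
    by_contra hwC
    have hwCc : w ∈ Cᶜ := hwC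
    set V := connectedComponentIn Cᶜ w with hVdef
    have hVb : IsBounded V := hw
    have hwV : w ∈ V := mem_connectedComponentIn hwCc
    have hVCc : V ⊆ Cᶜ := connectedComponentIn_subset _ _
    have hVconn : IsPreconnected V := isPreconnected_connectedComponentIn
    -- Step 1 : V ⊆ X
    have hVX : V ⊆ X := by
      intro q hqV
      by_contra hqX
      have hVq : V = connectedComponentIn Cᶜ q := connectedComponentIn_eq hqV
      have h1 : connectedComponentIn Xᶜ q ⊆ V := by
        rw [hVq]
        exact connectedComponentIn_mono q (compl_subset_compl.mpr hCX)
      have : q ∈ fill X := hVb.subset h1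
      rw [hXfull] at this
      exact hqX this
    have hwX : w ∈ X := hVX hwV
    set D := connectedComponentIn X w with hDdef
    have hwD : w ∈ D := mem_connectedComponentIn hwX
    -- D is disjoint from C
    have hDCc : D ⊆ Cᶜ := by
      intro y hyD hyC
      have h1 : D = connectedComponentIn X y := connectedComponentIn_eq hyD
      have h2 : C = connectedComponentIn X y := connectedComponentIn_eq hyC
      exact hwC (h2 ▸ h1 ▸ hwD)
    have hDV : D ⊆ V :=
      isPreconnected_connectedComponentIn.subset_connectedComponentIn hwD hDCc
    have hVD : V ⊆ D := hVconn.subset_connectedComponentIn hwV hVX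
    -- V is closed
    have hclVC : closure V ⊆ V ∪ C := by
      intro x hx
      by_cases hxC : x ∈ C
      · exact Or.inr hxC
      · refine Or.inl ?_
        have hconn : IsPreconnected (insert x V) :=
          hVconn.subset_closure (subset_insert _ _)
            (insert_subset hx subset_closure)
        have hsub : insert x V ⊆ Cᶜ := insert_subset hxC hVCc
        exact hconn.subset_connectedComponentIn (mem_insert_iff.mpr (Or.inr hwV)) hsub
          (mem_insert x V)
    have hclV : closure V ⊆ V := by
      have h1 : closure V ⊆ X := hclVC.trans (union_subset hVX hCX)
      have h2 : closure V ⊆ D :=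
        hVconn.closure.subset_connectedComponentIn (subset_closure hwV) h1
      exact h2.trans hDV
    have hVclosed : IsClosed V := isClosed_of_closure_subset hclV
    -- V is disjoint from closure C
    have hVclC : ∀ x ∈ V, x ∉ closure C := by
      intro x hxV hxclC
      have hC' : IsPreconnected (insert x C) :=
        hCconn.subset_closure (subset_insert _ _) (insert_subset hxclC subset_closure)
      have hU : IsPreconnected (insert x C ∪ V) :=
        hC'.union x (mem_insert _ _) hxV hVconn
      have hsub : insert x C ∪ V ⊆ X :=
        union_subset (insert_subset (hVX hxV) hCX) hVX
      have h1 : insert x C ∪ V ⊆ D :=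
        hU.subset_connectedComponentIn (Or.inr hwV) hsub
      have hzV : z ∈ V := hDV (h1 (Or.inl (mem_insert_iff.mpr (Or.inr hzC))))
      exact hVCc hzV hzC
    -- V is open : it is a connected component of the open set (closure C)ᶜ
    have hVopen : IsOpen V := by
      have hVU : V ⊆ (closure C)ᶜ := fun x hx => hVclC x hx
      have hUCc : (closure C)ᶜ ⊆ Cᶜ := compl_subset_compl.mpr subset_closure
      have hVeq : V = connectedComponentIn (closure C)ᶜ w := by
        apply Set.Subset.antisymm
        · exact hVconn.subset_connectedComponentIn hwV hVU
        · exact connectedComponentIn_mono w hUCc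
      rw [hVeq]
      exact (isClosed_closure.isOpen_compl).connectedComponentIn
    -- Contradiction : V is clopen, nonempty and proper
    have := isClopen_iff.mp ⟨hVclosed, hVopen⟩
    rcases this with h | h
    · rw [h] at hwV; exact hwV
    · have : z ∈ V := h ▸ mem_univ z
      exact hVCc this hzC
  · -- C ⊆ fill C
    intro x hx
    have : x ∉ Cᶜ := fun h => h hx
    show IsBounded (connectedComponentIn Cᶜ x)
    rw [connectedComponentIn_eq_empty this]
    exact isBounded_empty
end

section
/- Let X be a bounded subset of ℂ and let C be a connected component of fill(X). Then C = fill(X ∩ C). -/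
open Set Metric Bornology

section Topology

variable {α : Type*} [TopologicalSpace α]

theorem closure_connectedComponentIn_inter_subset (F : Set α) (z : α) :
    closure (connectedComponentIn F z) ∩ F ⊆ connectedComponentIn F z := by
  by_cases hz : z ∈ F
  · have hpre : IsPreconnected (closure (connectedComponentIn F z) ∩ F) :=
      isPreconnected_connectedComponentIn.subset_closure
        (subset_inter subset_closure (connectedComponentIn_subset F z)) inter_subset_left
    exact hpre.subset_connectedComponentIn
      ⟨subset_closure (mem_connectedComponentIn hz), hz⟩ inter_subset_right
  · simp [connectedComponentIn_eq_empty hz]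

theorem connectedComponentIn_inter_interior_subset [LocallyConnectedSpace α] (F : Set α)
    (z : α) :
    connectedComponentIn F z ∩ interior F ⊆ interior (connectedComponentIn F z) := by
  rintro x ⟨hxC, hxF⟩
  rw [connectedComponentIn_eq hxC]
  exact mem_interior.2 ⟨connectedComponentIn (interior F) x,
    connectedComponentIn_mono x interior_subset, isOpen_interior.connectedComponentIn,
    mem_connectedComponentIn hxF⟩

theorem IsPreconnected.union_of_closure_inter_nonempty {s t : Set α} (hs : IsPreconnected s)
    (ht : IsPreconnected t) (h : (closure s ∩ t).Nonempty) : IsPreconnected (s ∪ t) := by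
  obtain ⟨p, hps, hpt⟩ := h
  have := (hs.subset_closure (subset_insert p s) (insert_subset hps subset_closure)).union'
    ⟨p, mem_insert p s, hpt⟩ ht
  rwa [insert_union, insert_eq_of_mem (mem_union_right s hpt)] at this

theorem isPreconnected_union_connectedComponentIn_compl [PreconnectedSpace α]
    [LocallyConnectedSpace α] {C : Set α} (hC : IsPreconnected C) (hCne : C.Nonempty) (y : α) :
    IsPreconnected (C ∪ connectedComponentIn Cᶜ y) := by
  set V := connectedComponentIn Cᶜ y
  have hV : IsPreconnected V := isPreconnected_connectedComponentIn
  by_cases hy : y ∈ C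
  · simpa [V, connectedComponentIn_eq_empty (notMem_compl_iff.2 hy)] using hC
  by_cases h₁ : (closure C ∩ V).Nonempty
  · exact hC.union_of_closure_inter_nonempty hV h₁
  by_cases h₂ : (closure V ∩ C).Nonempty
  · exact union_comm V C ▸ hV.union_of_closure_inter_nonempty hC h₂
  -- Otherwise `V` is clopen, hence everything.
  exfalso
  have hyV : y ∈ V := mem_connectedComponentIn hy
  have hclosed : IsClosed V := isClosed_of_closure_subset <|
    hV.closure.subset_connectedComponentIn (subset_closure hyV)
      fun q hq hqC => h₂ ⟨q, hq, hqC⟩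
  have hVeq : connectedComponentIn (closure C)ᶜ y = V :=
    (connectedComponentIn_mono y (compl_subset_compl.2 subset_closure)).antisymm
      (hV.subset_connectedComponentIn hyV fun q hqV hqC => h₁ ⟨q, hqC, hqV⟩)
  have hopen : IsOpen V := hVeq ▸ isClosed_closure.isOpen_compl.connectedComponentIn
  have hVuniv : V = univ := IsClopen.eq_univ ⟨hclosed, hopen⟩ ⟨y, hyV⟩
  obtain ⟨c, hc⟩ := hCne
  exact connectedComponentIn_subset Cᶜ y (hVuniv.symm ▸ mem_univ c : c ∈ V) hc

theorem IsPreconnected.union_inter_of_closure_inter_subset {M G W : Set α}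
    (hM : IsPreconnected M) (hG : IsPreconnected G) (hGM : G ⊆ M) (hW : IsOpen W)
    (hWM : closure W ∩ M ⊆ G ∪ W) : IsPreconnected (G ∪ M ∩ W) := by
  rw [isPreconnected_iff_subset_of_disjoint]
  intro u v hu hv hcover hdisj
  wlog hGu : G ⊆ u generalizing u v
  · have hGv : G ⊆ v := (isPreconnected_iff_subset_of_disjoint.1 hG u v hu hv
      (subset_union_left.trans hcover) (subset_empty_iff.1 (hdisj ▸
        inter_subset_inter_left _ subset_union_left))).resolve_left hGu
    exact (this v u hv hu (union_comm u v ▸ hcover) (inter_comm u v ▸ hdisj) hGv).symm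
  set D := G ∪ M ∩ W
  have hDM : D ⊆ M := union_subset hGM inter_subset_left
  have not_uv : ∀ q ∈ D, q ∈ u → q ∉ v := fun q hqD hqu hqv =>
    (eq_empty_iff_forall_notMem.1 hdisj) q ⟨hqD, hqu, hqv⟩
  set B := D ∩ v
  have hBW : B ⊆ W := fun q ⟨hqD, hqv⟩ =>
    hqD.elim (fun hqG => (not_uv q hqD (hGu hqG) hqv).elim) (·.2)
  have hB : closure B ∩ M ⊆ B := by
    rintro q ⟨hqB, hqM⟩
    have hqD : q ∈ D :=
      (hWM ⟨closure_mono hBW hqB, hqM⟩).imp id fun hqW => ⟨hqM, hqW⟩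
    refine ⟨hqD, (hcover hqD).resolve_left fun hqu => ?_⟩
    obtain ⟨p, hpu, hpD, hpv⟩ := mem_closure_iff.1 hqB u hu hqu
    exact not_uv p hpD hpu hpv
  -- `B` is relatively clopen in `M`.
  have hMcover : M ⊆ W ∩ v ∪ (closure B)ᶜ := fun m hm =>
    (em (m ∈ closure B)).imp (fun h => ⟨hBW (hB ⟨h, hm⟩), (hB ⟨h, hm⟩).2⟩) id
  have hMdisj : M ∩ (W ∩ v ∩ (closure B)ᶜ) = ∅ :=
    eq_empty_iff_forall_notMem.2 fun m ⟨hmM, ⟨hmW, hmv⟩, hmB⟩ =>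
      hmB (subset_closure ⟨Or.inr ⟨hmM, hmW⟩, hmv⟩)
  rcases isPreconnected_iff_subset_of_disjoint.1 hM _ _ (hW.inter hv)
    isClosed_closure.isOpen_compl hMcover hMdisj with hMv | hMB
  · exact Or.inr (hDM.trans (hMv.trans inter_subset_right))
  · exact Or.inl fun q hqD => (hcover hqD).resolve_right fun hqv =>
      hMB (hDM hqD) (subset_closure ⟨hqD, hqv⟩)

end Topology

theorem Complex.isPreconnected_compl_closedBall_zero {r : ℝ} (hr : 0 < r) :
    IsPreconnected (closedBall (0 : ℂ) r)ᶜ := by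
  have himage : (closedBall (0 : ℂ) r)ᶜ = Complex.exp '' {w | Real.log r < w.re} := by
    ext x
    simp only [mem_compl_iff, mem_closedBall_zero_iff, not_le, mem_image, mem_ofPred_eq]
    constructor
    · intro hx
      exact ⟨Complex.log x, by rw [Complex.log_re]; exact Real.log_lt_log hr hx,
        Complex.exp_log (norm_pos_iff.1 (hr.trans hx))⟩
    · rintro ⟨w, hw, rfl⟩
      rw [Complex.norm_exp]
      exact (Real.log_lt_iff_lt_exp hr).1 hw
  rw [himage]
  exact (convex_halfSpace_re_gt _).isPreconnected.image _ Complex.continuous_exp.continuousOn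

theorem Bornology.IsBounded.not_isBounded_compl {E : Type*} [NormedAddCommGroup E]
    [NormedSpace ℝ E] [Nontrivial E] {S : Set E} (hS : IsBounded S) : ¬IsBounded Sᶜ :=
  fun h => NormedSpace.unbounded_univ ℝ E (by simpa using hS.union h)

/-- Both sets meet the complement of a large disc, which is connected. -/
theorem subset_connectedComponentIn_of_not_isBounded {S T T' : Set ℂ} (hS : IsBounded S)
    (hT : IsPreconnected T) (hTS : T ⊆ Sᶜ) (hTb : ¬IsBounded T)
    (hT' : IsPreconnected T') (hT'S : T' ⊆ Sᶜ) (hT'b : ¬IsBounded T') {x : ℂ}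
    (hx : x ∈ T) :
    T' ⊆ connectedComponentIn Sᶜ x := by
  obtain ⟨r, hr, hSr⟩ := hS.subset_closedBall_lt 0 0
  have meets : ∀ {U : Set ℂ}, ¬IsBounded U → (U ∩ (closedBall 0 r)ᶜ).Nonempty :=
    fun hU => inter_compl_nonempty_iff.2 fun h => hU (isBounded_closedBall.subset h)
  obtain ⟨p, hpT', hpr⟩ := meets hT'b
  have hpre : IsPreconnected (T ∪ (closedBall 0 r)ᶜ ∪ T') :=
    (hT.union' (meets hTb) (Complex.isPreconnected_compl_closedBall_zero hr)).union'
      ⟨p, Or.inr hpr, hpT'⟩ hT'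
  exact fun y hy => hpre.subset_connectedComponentIn (Or.inl (Or.inl hx))
    (union_subset (union_subset hTS (compl_subset_compl.2 hSr)) hT'S) (Or.inr hy)

section Fill

variable {X : Set ℂ}

theorem mem_fill_iff {z : ℂ} : z ∈ fill X ↔ IsBounded (connectedComponentIn Xᶜ z) := Iff.rfl

theorem subset_fill (X : Set ℂ) : X ⊆ fill X := fun x hx => by
  simp [fill, connectedComponentIn_eq_empty (notMem_compl_iff.2 hx)]

theorem fill_mono {A B : Set ℂ} (h : A ⊆ B) : fill A ⊆ fill B :=
  fun z hz => mem_fill_iff.2 <| (mem_fill_iff.1 hz).subset <|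
    connectedComponentIn_mono z (compl_subset_compl.2 h)

theorem connectedComponentIn_compl_subset_fill {y : ℂ} (hy : y ∈ fill X) :
    connectedComponentIn Xᶜ y ⊆ fill X :=
  fun _ hw => mem_fill_iff.2 (connectedComponentIn_eq hw ▸ mem_fill_iff.1 hy)

theorem isBounded_fill (hX : IsBounded X) : IsBounded (fill X) := by
  obtain ⟨r, hr, hXr⟩ := hX.subset_closedBall_lt 0 0
  refine (isBounded_closedBall : IsBounded (closedBall (0 : ℂ) r)).subset fun x hx => ?_
  by_contra hxr
  exact isBounded_closedBall.not_isBounded_compl <| (mem_fill_iff.1 hx).subset <|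
    (Complex.isPreconnected_compl_closedBall_zero hr).subset_connectedComponentIn hxr
      (compl_subset_compl.2 hXr)

theorem not_isBounded_compl_fill (hX : IsBounded X) : ¬IsBounded (fill X)ᶜ :=
  (isBounded_fill hX).not_isBounded_compl

theorem connectedComponentIn_compl_eq_compl_fill (hX : IsBounded X) {w : ℂ} (hw : w ∉ fill X) :
    connectedComponentIn Xᶜ w = (fill X)ᶜ := by
  refine Subset.antisymm (fun y hy hyF => hw ?_) fun y hy => ?_
  · exact mem_fill_iff.2 (connectedComponentIn_eq hy ▸ mem_fill_iff.1 hyF)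
  · exact subset_connectedComponentIn_of_not_isBounded hX isPreconnected_connectedComponentIn
      (connectedComponentIn_subset _ _) hw isPreconnected_connectedComponentIn
      (connectedComponentIn_subset _ _) hy
      (mem_connectedComponentIn fun hwX => hw (subset_fill X hwX))
      (mem_connectedComponentIn fun hyX => hy (subset_fill X hyX))

theorem isPreconnected_compl_fill (hX : IsBounded X) : IsPreconnected (fill X)ᶜ := by
  obtain ⟨w, hw⟩ := nonempty_of_not_isBounded (not_isBounded_compl_fill hX)
  rw [← connectedComponentIn_compl_eq_compl_fill hX hw]
  exact isPreconnected_connectedComponentIn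

theorem fill_fill (hX : IsBounded X) : fill (fill X) = fill X := by
  refine Subset.antisymm (fun q hq => ?_) (subset_fill _)
  by_contra hqF
  exact not_isBounded_compl_fill hX <| (mem_fill_iff.1 hq).subset <|
    (isPreconnected_compl_fill hX).subset_connectedComponentIn hqF subset_rfl

theorem fill_diff_subset_interior (hX : IsBounded X) : fill X \ X ⊆ interior (fill X) := by
  rintro q ⟨hqF, hqX⟩
  rw [← compl_compl (fill X), interior_compl]
  intro hq
  have hsub : insert q (fill X)ᶜ ⊆ connectedComponentIn Xᶜ q :=
    ((isPreconnected_compl_fill hX).subset_closure (subset_insert q _)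
      (insert_subset hq subset_closure)).subset_connectedComponentIn (mem_insert q _)
      (insert_subset hqX (compl_subset_compl.2 (subset_fill X)))
  exact not_isBounded_compl_fill hX <|
    (mem_fill_iff.1 hqF).subset ((subset_insert q _).trans hsub)

theorem connectedComponentIn_fill_diff_subset_interior (hX : IsBounded X) (z : ℂ) :
    connectedComponentIn (fill X) z \ X ⊆ interior (connectedComponentIn (fill X) z) :=
  fun _ ⟨hqC, hqX⟩ => connectedComponentIn_inter_interior_subset (fill X) z
    ⟨hqC, fill_diff_subset_interior hX ⟨connectedComponentIn_subset _ _ hqC, hqX⟩⟩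

theorem fill_connectedComponentIn_fill_subset (hX : IsBounded X) {z : ℂ} (hz : z ∈ fill X) :
    fill (connectedComponentIn (fill X) z) ⊆ connectedComponentIn (fill X) z := by
  set C := connectedComponentIn (fill X) z
  have hzC : z ∈ C := mem_connectedComponentIn hz
  intro y hy
  by_cases hyC : y ∈ C
  · exact hyC
  have hfill : fill C ⊆ fill X := fill_fill hX ▸ fill_mono (connectedComponentIn_subset _ _)
  exact (isPreconnected_union_connectedComponentIn_compl isPreconnected_connectedComponentIn
    ⟨z, hzC⟩ y).subset_connectedComponentIn (Or.inl hzC)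
    (union_subset (connectedComponentIn_subset _ _)
      ((connectedComponentIn_compl_subset_fill hy).trans hfill))
    (Or.inr (mem_connectedComponentIn hyC))

theorem connectedComponentIn_fill_subset_fill_inter (hX : IsBounded X) (z₀ : ℂ) :
    connectedComponentIn (fill X) z₀ ⊆ fill (X ∩ connectedComponentIn (fill X) z₀) := by
  set F := fill X
  set C := connectedComponentIn F z₀
  set Y := X ∩ C
  intro z hzC
  by_contra hz
  set M := connectedComponentIn Yᶜ z
  have hzM : z ∈ M := mem_connectedComponentIn fun hzY => hz (subset_fill Y hzY)
  have hMX : M ∩ C ⊆ Xᶜ := fun q ⟨hqM, hqC⟩ hqX =>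
    connectedComponentIn_subset Yᶜ z hqM ⟨hqX, hqC⟩
  have hint : M ∩ C ⊆ interior C :=
    fun q hq => connectedComponentIn_fill_diff_subset_interior hX z₀ ⟨hq.2, hMX hq⟩
  have hFX : Fᶜ ⊆ Xᶜ := compl_subset_compl.2 (subset_fill X)
  have hFM : Fᶜ ⊆ M := subset_connectedComponentIn_of_not_isBounded
    (hX.subset inter_subset_left) isPreconnected_connectedComponentIn
    (connectedComponentIn_subset _ _) hz (isPreconnected_compl_fill hX)
    (hFX.trans (compl_subset_compl.2 inter_subset_left)) (not_isBounded_compl_fill hX) hzM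
  have hbdry : closure (interior C) ∩ M ⊆ Fᶜ ∪ interior C := fun q ⟨hq, hqM⟩ => by
    by_cases hqF : q ∈ F
    · exact Or.inr (hint ⟨hqM, closure_connectedComponentIn_inter_subset F z₀
        ⟨closure_mono interior_subset hq, hqF⟩⟩)
    · exact Or.inl hqF
  have hD : IsPreconnected (Fᶜ ∪ M ∩ interior C) :=
    isPreconnected_connectedComponentIn.union_inter_of_closure_inter_subset
      (isPreconnected_compl_fill hX) hFM isOpen_interior hbdry
  have hDX : Fᶜ ∪ M ∩ interior C ⊆ Xᶜ :=
    union_subset hFX fun q hq => hMX ⟨hq.1, interior_subset hq.2⟩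
  have hDz := hD.subset_connectedComponentIn (Or.inr ⟨hzM, hint ⟨hzM, hzC⟩⟩) hDX
  exact not_isBounded_compl_fill hX <|
    (mem_fill_iff.1 (connectedComponentIn_subset F z₀ hzC)).subset (subset_union_left.trans hDz)

end Fill

/-- If `X` is a bounded subset of `ℂ` and `C` is a connected component of `fill X`,
then `C = fill (X ∩ C)`. -/
theorem component_of_fill_eq_fill_inter (X : Set ℂ) (hX : Bornology.IsBounded X)
    (C : Set ℂ) (hC : ∃ z ∈ fill X, C = connectedComponentIn (fill X) z) :
    C = fill (X ∩ C) := by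
  obtain ⟨z, hz, rfl⟩ := hC
  exact (connectedComponentIn_fill_subset_fill_inter hX z).antisymm
    ((fill_mono inter_subset_right).trans (fill_connectedComponentIn_fill_subset hX hz))
end

section
/- Let P be a nonconstant polynomial with complex coefficients, viewed as the map z ↦ P(z) on ℂ, and let K be a compact subset of ℂ. Then the preimage of the filling equals the filling of the preimage: P⁻¹(fill(K)) = fill(P⁻¹(K)). -/
/-!
Write `f` for `P`, `U = ℂ \ K`, `C` the component of `f⁻¹ U` at `z` and `D` the component of `U`
at `f z`. By continuity `f C ⊆ D`, so `C` is bounded when `D` is, since `f` is proper.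
Conversely, if `C` is bounded then `f C` is open (open mapping) and closed in `U`: a limit point
of `f C` in `U` is `f x` with `x ∈ closure C ∩ f⁻¹ U`, and such an `x` lies in `C` because
components of open sets in `ℂ` are open. As `D` is connected, `f C = D`, and `D` is bounded.
-/

open Polynomial

open Set

section ConnectedComponentIn

variable {X Y : Type*} [TopologicalSpace X] [TopologicalSpace Y] {f : X → Y} {U : Set Y}

theorem closure_connectedComponentIn_inter_subset_s8 [LocallyConnectedSpace X] {F : Set X}
    (hF : IsOpen F) (x : X) :
    closure (connectedComponentIn F x) ∩ F ⊆ connectedComponentIn F x := by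
  rintro w ⟨hw, hwF⟩
  obtain ⟨y, hyw, hyx⟩ := mem_closure_iff_nhds.mp hw _
    (connectedComponentIn_mem_nhds (hF.mem_nhds hwF))
  rw [connectedComponentIn_eq hyx, ← connectedComponentIn_eq hyw]
  exact mem_connectedComponentIn hwF

theorem Continuous.mapsTo_connectedComponentIn_preimage (hf : Continuous f) (x : X) :
    MapsTo f (connectedComponentIn (f ⁻¹' U) x) (connectedComponentIn U (f x)) := by
  by_cases hx : x ∈ f ⁻¹' U
  · exact (hf.continuousOn.mapsTo_connectedComponentIn hx).mono_right
      (connectedComponentIn_mono _ (image_preimage_subset f U))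
  · simp [connectedComponentIn_eq_empty hx, mapsTo_empty]

theorem image_connectedComponentIn_preimage_of_isCompact_closure [LocallyConnectedSpace X]
    [T2Space Y] (hf : Continuous f) (hfo : IsOpenMap f) (hU : IsOpen U) {x : X}
    (hx : x ∈ f ⁻¹' U) (hC : IsCompact (closure (connectedComponentIn (f ⁻¹' U) x))) :
    f '' connectedComponentIn (f ⁻¹' U) x = connectedComponentIn U (f x) := by
  set C := connectedComponentIn (f ⁻¹' U) x
  refine subset_antisymm (hf.mapsTo_connectedComponentIn_preimage x).image_subset ?_
  have hCopen : IsOpen C := (hU.preimage hf).connectedComponentIn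
  have hclosure : closure (f '' C) ⊆ f '' closure C :=
    closure_minimal (image_mono subset_closure) (hC.image hf).isClosed
  refine isPreconnected_connectedComponentIn.subset_of_closure_inter_subset (hfo C hCopen)
    ⟨f x, mem_connectedComponentIn hx, mem_image_of_mem f (mem_connectedComponentIn hx)⟩ ?_
  rintro _ ⟨hw, hwD⟩
  obtain ⟨y, hy, rfl⟩ := hclosure hw
  exact mem_image_of_mem f <| closure_connectedComponentIn_inter_subset_s8 (hU.preimage hf) x
    ⟨hy, connectedComponentIn_subset U _ hwD⟩

end ConnectedComponentIn

/-- For a nonconstant polynomial `P` over `ℂ` and a compact set `K ⊆ ℂ`,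
the preimage of the filling equals the filling of the preimage:
`P⁻¹(fill K) = fill (P⁻¹ K)`. -/
theorem preimage_fill_eq_fill_preimage (P : Polynomial ℂ) (hP : 0 < P.natDegree)
    (K : Set ℂ) (hK : IsCompact K) :
    (fun z : ℂ => P.eval z) ⁻¹' (fill K) = fill ((fun z : ℂ => P.eval z) ⁻¹' K) := by
  have hProper : IsProperMap P.eval := P.isProperMap_eval (natDegree_pos_iff_degree_pos.mp hP)
  have hOpen : IsOpenMap P.eval := (P.isOpenQuotientMap_eval hP.ne').isOpenMap
  have hU : IsOpen Kᶜ := hK.isClosed.isOpen_compl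
  ext z
  simp only [fill, mem_preimage, mem_ofPred_eq, ← preimage_compl]
  constructor
  · intro hD
    exact (hProper.isCompact_preimage hD.isCompact_closure).isBounded.subset
      ((P.continuous.mapsTo_connectedComponentIn_preimage z).mono_right subset_closure)
  · intro hC
    by_cases hz : P.eval z ∈ Kᶜ
    · rw [← image_connectedComponentIn_preimage_of_isCompact_closure P.continuous hOpen hU hz
        hC.isCompact_closure]
      exact (hC.isCompact_closure.image P.continuous).isBounded.subset
        (image_mono subset_closure)
    · simp [connectedComponentIn_eq_empty hz]
end

section
/- Let P be a nonconstant polynomial with complex coefficients, viewed as the map z ↦ P(z) on ℂ, and let K be a nonempty compact connected subset of ℂ. Then P⁻¹(K) has only finitely many connected components, and every connected component C of P⁻¹(K) is mapped surjectively onto K by P, i.e. P(C) = K. -/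
/-!
A nonconstant polynomial is continuous, open and proper, so `L = P⁻¹(K)` is compact. If `A` is a
nonempty clopen piece of `L`, then `P(A)` is relatively clopen in `K` and hence, `K` being
connected, equal to `K`. In the compact Hausdorff space `L` a connected component is the
intersection of its clopen neighbourhoods, so by compactness it still meets every fibre over `K`.
In particular every component meets the finite fibre over one point of `K`, so there are finitely
many of them.
-/

open Polynomial Set

section

variable {X Y : Type*} [TopologicalSpace X] [TopologicalSpace Y]

theorem connectedComponent_inter_nonempty_of_forall_isClopen [T2Space X] [CompactSpace X]
    {x : X} {F : Set X} (hF : IsClosed F) (h : ∀ Z, IsClopen Z → x ∈ Z → (Z ∩ F).Nonempty) :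
    (connectedComponent x ∩ F).Nonempty := by
  by_contra hdisj
  rw [not_nonempty_iff_eq_empty, connectedComponent_eq_iInter_isClopen, inter_comm] at hdisj
  have : Nonempty {Z : Set X // IsClopen Z ∧ x ∈ Z} := ⟨⟨univ, isClopen_univ, mem_univ x⟩⟩
  obtain ⟨Z, hZ⟩ := hF.isCompact.elim_directed_family_closed _ (fun Z => Z.2.1.isClosed) hdisj
    fun Z₁ Z₂ => ⟨⟨Z₁.1 ∩ Z₂.1, Z₁.2.1.inter Z₂.2.1, Z₁.2.2, Z₂.2.2⟩,
      inter_subset_left, inter_subset_right⟩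
  exact (h Z Z.2.1 Z.2.2).ne_empty (by rw [inter_comm, hZ])

variable [LocallyCompactSpace X] [T2Space X] [T2Space Y] {f : X → Y}

/-- Take a relatively compact open `V ⊇ A` with `closure V ∩ f⁻¹(K) ⊆ A`: the connected set `K`
is covered by the disjoint open sets `f(V)` and `f(closure V)ᶜ`, and meets the first. -/
theorem IsOpenMap.subset_image_of_isCompact_of_isClosed_diff (hfc : Continuous f)
    (hfo : IsOpenMap f) {K : Set Y} (hK : IsPreconnected K) {A : Set X} (hA : IsCompact A)
    (hAne : A.Nonempty) (hAK : A ⊆ f ⁻¹' K) (hdiff : IsClosed (f ⁻¹' K \ A)) :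
    K ⊆ f '' A := by
  obtain ⟨V, hVo, hAV, hVcl, hVcpt⟩ := exists_open_between_and_isCompact_closure hA
    hdiff.isOpen_compl fun a ha h => h.2 ha
  have hVK : closure V ∩ f ⁻¹' K ⊆ A := fun z ⟨hzV, hzK⟩ => by
    by_contra hzA
    exact hVcl hzV ⟨hzK, hzA⟩
  have hcover : K ⊆ f '' V ∪ (f '' closure V)ᶜ := by
    intro k hk
    by_cases hkV : k ∈ f '' closure V
    · obtain ⟨z, hz, rfl⟩ := hkV
      exact Or.inl ⟨z, hAV (hVK ⟨hz, hk⟩), rfl⟩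
    · exact Or.inr hkV
  obtain ⟨a, ha⟩ := hAne
  have hKV : K ⊆ f '' V := hK.subset_left_of_subset_union (hfo V hVo)
    (hVcpt.image hfc).isClosed.isOpen_compl
    (disjoint_compl_right_iff_subset.mpr (image_mono subset_closure)) hcover
    ⟨f a, hAK ha, a, hAV ha, rfl⟩
  rintro k hk
  obtain ⟨z, hz, rfl⟩ := hKV hk
  exact ⟨z, hVK ⟨subset_closure hz, hk⟩, rfl⟩

theorem IsOpenMap.image_connectedComponentIn_preimage (hfc : Continuous f) (hfo : IsOpenMap f)
    {K : Set Y} (hK : IsPreconnected K) (hKcpt : IsCompact (f ⁻¹' K)) {z : X}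
    (hz : z ∈ f ⁻¹' K) : f '' connectedComponentIn (f ⁻¹' K) z = K := by
  refine (image_subset_iff.mpr (connectedComponentIn_subset _ _)).antisymm fun k hk => ?_
  have : CompactSpace (f ⁻¹' K) := isCompact_iff_compactSpace.mp hKcpt
  have hfiber : IsClosed {x : f ⁻¹' K | f x = k} :=
    isClosed_eq (hfc.comp continuous_subtype_val) continuous_const
  obtain ⟨x, hx, hxk⟩ := connectedComponent_inter_nonempty_of_forall_isClopen hfiber
    fun Z hZ hzZ => by
      have hZK : K ⊆ f '' (Subtype.val '' Z) :=
        hfo.subset_image_of_isCompact_of_isClosed_diff hfc hK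
          (hZ.isClosed.isCompact.image continuous_subtype_val) ⟨z, ⟨z, hz⟩, hzZ, rfl⟩
          (image_subset_iff.mpr fun x _ => x.2)
          (image_val_compl ▸ (hZ.compl.isClosed.isCompact.image continuous_subtype_val).isClosed)
      obtain ⟨_, ⟨x, hxZ, rfl⟩, hxk⟩ := hZK hk
      exact ⟨x, hxZ, hxk⟩
  exact ⟨x, connectedComponentIn_eq_image hz ▸ mem_image_of_mem _ hx, hxk⟩

end

theorem Polynomial.finite_setOf_eval_eq {P : ℂ[X]} (hP : 0 < P.natDegree) (k : ℂ) :
    {w : ℂ | P.eval w = k}.Finite := by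
  have hne : P - C k ≠ 0 := fun h => by
    rw [sub_eq_zero.mp h, natDegree_C] at hP
    exact hP.false
  simpa [IsRoot, sub_eq_zero] using Polynomial.finite_setOfPred_isRoot hne

/-- For a nonconstant polynomial `P` over `ℂ` and a continuum `K ⊆ ℂ` (a nonempty
compact connected set), the preimage `P⁻¹(K)` has finitely many connected components,
and each connected component `C` of `P⁻¹(K)` satisfies `P(C) = K`. -/
theorem preimage_continuum_components (P : Polynomial ℂ) (hP : 0 < P.natDegree)
    (K : Set ℂ) (hKne : K.Nonempty) (hKcomp : IsCompact K) (hKconn : IsConnected K) :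
    {C : Set ℂ | ∃ z ∈ (fun w : ℂ => P.eval w) ⁻¹' K,
        C = connectedComponentIn ((fun w : ℂ => P.eval w) ⁻¹' K) z}.Finite ∧
    ∀ C : Set ℂ,
      (∃ z ∈ (fun w : ℂ => P.eval w) ⁻¹' K,
        C = connectedComponentIn ((fun w : ℂ => P.eval w) ⁻¹' K) z) →
      (fun w : ℂ => P.eval w) '' C = K := by
  set L := (fun w : ℂ => P.eval w) ⁻¹' K
  have hLcpt : IsCompact L :=
    (P.isProperMap_eval (natDegree_pos_iff_degree_pos.mp hP)).isCompact_preimage hKcomp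
  have himage : ∀ z ∈ L, (fun w : ℂ => P.eval w) '' connectedComponentIn L z = K := fun z hz =>
    (P.isOpenQuotientMap_eval hP.ne').isOpenMap.image_connectedComponentIn_preimage
      P.continuous hKconn.isPreconnected hLcpt hz
  refine ⟨?_, fun C ⟨z, hz, hC⟩ => hC ▸ himage z hz⟩
  obtain ⟨k, hk⟩ := hKne
  refine ((P.finite_setOf_eval_eq hP k).image (connectedComponentIn L)).subset ?_
  rintro _ ⟨z, hz, rfl⟩
  obtain ⟨w, hw, hwk⟩ := (himage z hz).symm ▸ hk
  exact ⟨w, hwk, (connectedComponentIn_eq hw).symm⟩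
end

section
/- Let P be a nonconstant polynomial with complex coefficients, viewed as the map z ↦ P(z) on ℂ, and let K be a nonempty compact connected subset of ℂ. Then there exists an open set V ⊆ ℂ with K ⊆ V such that every connected component of P⁻¹(V) contains at most one connected component of P⁻¹(K). -/
open Polynomial Set Filter Metric

/-- For a nonconstant polynomial `P` over `ℂ` and a continuum `K ⊆ ℂ`, there is an
open neighborhood `V` of `K` such that every connected component of `P⁻¹(V)` contains
at most one connected component of `P⁻¹(K)`: equivalently, any two points of `P⁻¹(K)`
lying in the same connected component of `P⁻¹(V)` lie in the same connected component
of `P⁻¹(K)`. -/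
theorem exists_nbhd_separating_preimage_components (P : Polynomial ℂ)
    (hP : 0 < P.natDegree) (K : Set ℂ) (hKne : K.Nonempty) (hKcomp : IsCompact K)
    (hKconn : IsConnected K) :
    ∃ V : Set ℂ, IsOpen V ∧ K ⊆ V ∧
      ∀ z₁ ∈ (fun w : ℂ => P.eval w) ⁻¹' K, ∀ z₂ ∈ (fun w : ℂ => P.eval w) ⁻¹' K,
        connectedComponentIn ((fun w : ℂ => P.eval w) ⁻¹' V) z₁ =
          connectedComponentIn ((fun w : ℂ => P.eval w) ⁻¹' V) z₂ →
        connectedComponentIn ((fun w : ℂ => P.eval w) ⁻¹' K) z₁ =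
          connectedComponentIn ((fun w : ℂ => P.eval w) ⁻¹' K) z₂ := by
  classical
  set f : ℂ → ℂ := fun w : ℂ => P.eval w with hfdef
  have hfc : Continuous f := P.continuous
  -- `f` is a proper map
  have hproper : IsProperMap f := by
    rw [isProperMap_iff_tendsto_cocompact]
    refine ⟨hfc, ?_⟩
    rw [← Metric.cobounded_eq_cocompact, ← tendsto_norm_atTop_iff_cobounded]
    exact P.tendsto_norm_atTop (natDegree_pos_iff_degree_pos.mp hP)
      tendsto_norm_cobounded_atTop
  -- `f` is an open map
  have hopen : IsOpenMap f := by
    rcases (AnalyticOnNhd.eval_polynomial (𝕜 := ℂ) P).is_constant_or_isOpen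
        isPreconnected_univ with ⟨w, hw⟩ | h
    · exfalso
      have : P = C w := Polynomial.funext fun r => by
        simpa using hw r (mem_univ r)
      rw [this] at hP
      simp at hP
    · intro U hU
      exact h U (subset_univ U) hU
  set L : Set ℂ := f ⁻¹' K with hLdef
  have hLcomp : IsCompact L := hproper.isCompact_preimage hKcomp
  haveI : CompactSpace L := isCompact_iff_compactSpace.mp hLcomp
  obtain ⟨k₀, hk₀⟩ := hKne
  -- the image of any nonempty clopen subset of `L` is all of `K`
  have himage : ∀ Z : Set L, IsClopen Z → Z.Nonempty →
      (fun z : L => f ↑z) '' Z = K := by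
    intro Z hZ hZne
    obtain ⟨O, hO, hOZ⟩ := isOpen_induced_iff.mp hZ.isOpen
    have hAeq : (fun z : L => f ↑z) '' Z = f '' O ∩ K := by
      ext w
      constructor
      · rintro ⟨z, hzZ, rfl⟩
        rw [← hOZ] at hzZ
        exact ⟨⟨(z : ℂ), hzZ, rfl⟩, z.2⟩
      · rintro ⟨⟨u, huO, rfl⟩, huK⟩
        refine ⟨⟨u, huK⟩, ?_, rfl⟩
        rw [← hOZ]
        exact huO
    have hAne : ((fun z : L => f ↑z) '' Z).Nonempty := hZne.image _
    have hAcomp : IsCompact ((fun z : L => f ↑z) '' Z) :=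
      (hZ.isClosed.isCompact).image (hfc.comp continuous_subtype_val)
    have hAsubK : (fun z : L => f ↑z) '' Z ⊆ K := by
      rw [hAeq]; exact inter_subset_right
    -- use preconnectedness of K with u = f '' O and v = complement of the image
    have hKsub : K ⊆ (fun z : L => f ↑z) '' Z := by
      by_contra hnot
      have hvne : (K ∩ ((fun z : L => f ↑z) '' Z)ᶜ).Nonempty := by
        rw [not_subset] at hnot
        obtain ⟨k, hkK, hkA⟩ := hnot
        exact ⟨k, hkK, hkA⟩
      have hune : (K ∩ f '' O).Nonempty := by
        obtain ⟨a, haA⟩ := hAne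
        have haK : a ∈ K := hAsubK haA
        have : a ∈ f '' O ∩ K := by rw [← hAeq]; exact haA
        exact ⟨a, haK, this.1⟩
      have hcover : K ⊆ f '' O ∪ ((fun z : L => f ↑z) '' Z)ᶜ := by
        intro k hk
        by_cases hkA : k ∈ (fun z : L => f ↑z) '' Z
        · left
          have : k ∈ f '' O ∩ K := by rw [← hAeq]; exact hkA
          exact this.1
        · right; exact hkA
      obtain ⟨k, hkK, hku, hkv⟩ := hKconn.isPreconnected (f '' O)
        (((fun z : L => f ↑z) '' Z)ᶜ) (hopen O hO) hAcomp.isClosed.isOpen_compl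
        hcover hune hvne
      exact hkv (by rw [hAeq]; exact ⟨hku, hkK⟩)
    exact Subset.antisymm hAsubK hKsub
  -- every connected component of `L` meets the fiber over `k₀`
  have hcomp_fiber : ∀ x : L, ∃ y : L, y ∈ connectedComponent x ∧ f ↑y = k₀ := by
    intro x
    haveI : Nonempty {Z : Set L // IsClopen Z ∧ x ∈ Z} :=
      ⟨⟨univ, isClopen_univ, mem_univ x⟩⟩
    have key : (⋂ Z : {Z : Set L // IsClopen Z ∧ x ∈ Z},
        ((Z : Set L) ∩ (fun z : L => f ↑z) ⁻¹' {k₀})).Nonempty := by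
      apply IsCompact.nonempty_iInter_of_directed_nonempty_isCompact_isClosed
      · intro Z₁ Z₂
        refine ⟨⟨Z₁.1 ∩ Z₂.1, Z₁.2.1.inter Z₂.2.1, ⟨Z₁.2.2, Z₂.2.2⟩⟩, ?_, ?_⟩
        · exact inter_subset_inter inter_subset_left (Subset.refl _)
        · exact inter_subset_inter inter_subset_right (Subset.refl _)
      · intro Z
        have h1 := himage Z.1 Z.2.1 ⟨x, Z.2.2⟩
        have hk : k₀ ∈ (fun z : L => f ↑z) '' Z.1 := h1 ▸ hk₀
        obtain ⟨y, hyZ, hyk⟩ := hk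
        exact ⟨y, hyZ, by simpa using hyk⟩
      · intro Z
        exact ((Z.2.1.isClosed.inter (isClosed_singleton.preimage
          (hfc.comp continuous_subtype_val)))).isCompact
      · intro Z
        exact Z.2.1.isClosed.inter (isClosed_singleton.preimage
          (hfc.comp continuous_subtype_val))
    obtain ⟨y, hy⟩ := key
    rw [mem_iInter] at hy
    refine ⟨y, ?_, ?_⟩
    · rw [connectedComponent_eq_iInter_isClopen x, mem_iInter]
      intro Z
      exact (hy Z).1
    · have := (hy ⟨univ, isClopen_univ, mem_univ x⟩).2
      simpa using this
  -- the fiber over `k₀` is finite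
  have hQ : P - C k₀ ≠ 0 := by
    intro h
    have : P = C k₀ := by linear_combination (norm := ring_nf) h
    rw [this] at hP
    simp at hP
  have hFfin : {z : ℂ | f z = k₀}.Finite := by
    have : {z : ℂ | f z = k₀} = {z : ℂ | (P - C k₀).IsRoot z} := by
      ext z
      simp [Polynomial.IsRoot, sub_eq_zero, hfdef]
    rw [this]
    exact Polynomial.finite_setOf_isRoot hQ
  set F : Set ℂ := {z : ℂ | f z = k₀} with hFdef
  set c : ℂ → Set ℂ := fun z => connectedComponentIn L z with hcdef
  -- every component of `L` is the component of a fiber point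
  have hrep : ∀ z ∈ L, ∃ y ∈ F ∩ L, c z = c y := by
    intro z hz
    obtain ⟨y, hymem, hyk⟩ := hcomp_fiber ⟨z, hz⟩
    have hyin : (y : ℂ) ∈ connectedComponentIn L z := by
      rw [connectedComponentIn_eq_image hz]
      exact ⟨y, hymem, rfl⟩
    exact ⟨(y : ℂ), ⟨hyk, y.2⟩, connectedComponentIn_eq hyin⟩
  set 𝒞 : Set (Set ℂ) := c '' (F ∩ L) with h𝒞def
  have h𝒞fin : 𝒞.Finite := (hFfin.inter_of_left L).image c
  have hCsubL : ∀ C ∈ 𝒞, C ⊆ L := by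
    rintro C ⟨y, hy, rfl⟩
    exact connectedComponentIn_subset L y
  have hCcomp : ∀ C ∈ 𝒞, IsCompact C := by
    rintro C ⟨y, hy, rfl⟩
    show IsCompact (connectedComponentIn L y)
    rw [connectedComponentIn_eq_image hy.2]
    exact (isClosed_connectedComponent.isCompact).image continuous_subtype_val
  have hczmem : ∀ z ∈ L, c z ∈ 𝒞 := by
    intro z hz
    obtain ⟨y, hy, hcy⟩ := hrep z hz
    exact ⟨y, hy, hcy.symm⟩
  have hpair : ∀ C ∈ 𝒞, ∀ C' ∈ 𝒞, C ≠ C' → Disjoint C C' := by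
    rintro C ⟨y, hy, rfl⟩ C' ⟨y', hy', rfl⟩ hne
    rw [Set.disjoint_left]
    intro w hw hw'
    exact hne ((connectedComponentIn_eq hw).trans (connectedComponentIn_eq hw').symm)
  -- choose disjoint thickenings of the components
  have hthick : ∀ C ∈ 𝒞, ∃ δ, 0 < δ ∧
      Disjoint (thickening δ C) (thickening δ (⋃₀ (𝒞 \ {C}))) := by
    intro C hC
    apply Disjoint.exists_thickenings
    · rw [Set.disjoint_sUnion_right]
      intro C' hC'
      exact hpair C hC C' hC'.1 (fun h => hC'.2 h.symm)
    · exact hCcomp C hC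
    · rw [sUnion_eq_biUnion]
      apply Set.Finite.isClosed_biUnion (h𝒞fin.subset diff_subset)
      intro C' hC'
      exact (hCcomp C' hC'.1).isClosed
  choose! δ hδpos hδ using hthick
  have hTdisj : ∀ C ∈ 𝒞, ∀ C' ∈ 𝒞, C ≠ C' →
      Disjoint (thickening (δ C) C) (thickening (δ C') C') := by
    have main : ∀ C ∈ 𝒞, ∀ C' ∈ 𝒞, C ≠ C' → δ C' ≤ δ C →
        Disjoint (thickening (δ C) C) (thickening (δ C') C') := by
      intro C hC C' hC' hne hle
      refine (hδ C hC).mono_right ?_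
      refine (thickening_mono hle C').trans (thickening_subset_of_subset _ ?_)
      exact subset_sUnion_of_mem ⟨hC', fun h => hne (by simpa using h.symm)⟩
    intro C hC C' hC' hne
    rcases le_total (δ C') (δ C) with h | h
    · exact main C hC C' hC' hne h
    · exact (main C' hC' C hC hne.symm h).symm
  set U : Set ℂ := ⋃ C ∈ 𝒞, thickening (δ C) C with hUdef
  have hUopen : IsOpen U := isOpen_biUnion fun C _ => isOpen_thickening
  have hLU : L ⊆ U := by
    intro z hz
    have hz1 : z ∈ c z := mem_connectedComponentIn hz
    exact mem_biUnion (hczmem z hz) (self_subset_thickening (hδpos _ (hczmem z hz)) _ hz1)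
  -- define V
  refine ⟨(f '' Uᶜ)ᶜ, ?_, ?_, ?_⟩
  · rw [isOpen_compl_iff]
    exact hproper.isClosedMap _ hUopen.isClosed_compl
  · intro k hk hmem
    obtain ⟨z, hzU, hzk⟩ := hmem
    exact hzU (hLU (by simpa [hLdef, hzk] using hk))
  · intro z₁ hz₁ z₂ hz₂ heq
    have hpreV : f ⁻¹' (f '' Uᶜ)ᶜ ⊆ U := by
      intro z hz
      by_contra hzU
      exact hz ⟨z, hzU, rfl⟩
    have hKV : K ⊆ (f '' Uᶜ)ᶜ := by
      intro k hk hmem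
      obtain ⟨z, hzU, hzk⟩ := hmem
      exact hzU (hLU (by simpa [hLdef, hzk] using hk))
    have hz₁V : z₁ ∈ f ⁻¹' (f '' Uᶜ)ᶜ := hKV hz₁
    have hz₂V : z₂ ∈ f ⁻¹' (f '' Uᶜ)ᶜ := hKV hz₂
    set T : Set ℂ := connectedComponentIn (f ⁻¹' (f '' Uᶜ)ᶜ) z₁ with hTdef
    have hTpre : IsPreconnected T := isPreconnected_connectedComponentIn
    have hz₁T : z₁ ∈ T := mem_connectedComponentIn hz₁V
    have hz₂T : z₂ ∈ T := by
      rw [hTdef] at heq ⊢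
      rw [heq]
      exact mem_connectedComponentIn hz₂V
    have hTU : T ⊆ U := (connectedComponentIn_subset _ _).trans hpreV
    set C₁ : Set ℂ := c z₁ with hC₁def
    set C₂ : Set ℂ := c z₂ with hC₂def
    have hC₁ : C₁ ∈ 𝒞 := hczmem z₁ hz₁
    have hC₂ : C₂ ∈ 𝒞 := hczmem z₂ hz₂
    -- T lies in the thickening of C₁
    set W : Set ℂ := thickening (δ C₁) C₁ with hWdef
    set W' : Set ℂ := ⋃ C ∈ 𝒞 \ {C₁}, thickening (δ C) C with hW'def
    have hWW' : W ∩ W' = ∅ := by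
      rw [eq_empty_iff_forall_notMem]
      rintro w ⟨hwW, hwW'⟩
      obtain ⟨C, hC, hwC⟩ := mem_iUnion₂.mp hwW'
      exact (hTdisj C₁ hC₁ C hC.1 (fun h => hC.2 (by simpa using h.symm))).le_bot
        ⟨hwW, hwC⟩
    have hUcover : U ⊆ W ∪ W' := by
      intro w hw
      obtain ⟨C, hC, hwC⟩ := mem_iUnion₂.mp hw
      by_cases hCC₁ : C = C₁
      · left
        show w ∈ thickening (δ C₁) C₁
        rw [← hCC₁]
        exact hwC
      · right; exact mem_iUnion₂.mpr ⟨C, ⟨hC, hCC₁⟩, hwC⟩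
    have hz₁W : z₁ ∈ W :=
      self_subset_thickening (hδpos _ hC₁) _ (mem_connectedComponentIn hz₁)
    have hTW : T ⊆ W := by
      by_contra hnot
      rw [not_subset] at hnot
      obtain ⟨t, htT, htW⟩ := hnot
      have htW' : t ∈ W' := (hUcover (hTU htT)).resolve_left htW
      obtain ⟨s, hsT, hsW, hsW'⟩ := hTpre W W' isOpen_thickening
        (isOpen_biUnion fun C _ => isOpen_thickening)
        (fun x hx => hUcover (hTU hx)) ⟨z₁, hz₁T, hz₁W⟩ ⟨t, htT, htW'⟩
      rw [eq_empty_iff_forall_notMem] at hWW'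
      exact hWW' s ⟨hsW, hsW'⟩
    have hz₂W : z₂ ∈ W := hTW hz₂T
    have hz₂C₂ : z₂ ∈ thickening (δ C₂) C₂ :=
      self_subset_thickening (hδpos _ hC₂) _ (mem_connectedComponentIn hz₂)
    -- conclude C₁ = C₂
    by_contra hne
    exact (hTdisj C₁ hC₁ C₂ hC₂ hne).le_bot ⟨hz₂W, hz₂C₂⟩
end

section
/- Let U ⊆ ℂ be open, let f : ℂ → ℂ be holomorphic (complex differentiable) on U, and let K be a compact subset of U. Then the following are equivalent: (i) there is no open set V with K ⊆ V ⊆ U on which f is injective; (ii) either f has a critical point on K (i.e. there exists z ∈ K with f'(z) = 0), or the restriction of f to K is not injective (or both). -/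
/-!
Near a point `z₀` where `f` is analytic, either `f` is constant, or `f z = f z₀ + φ z ^ n`
for a local coordinate `φ` vanishing at `z₀` and `n` the order of `f - f z₀` at `z₀`; a critical
point forces `n ≥ 2`, and then `f` identifies `φ⁻¹ w` with `φ⁻¹ (ζ w)` for an `n`-th root of unity
`ζ ≠ 1`, so `f` is injective on no neighbourhood of `z₀`. Conversely, if `f' ≠ 0` on `K` then
`f` is locally injective at each point of `K` by the inverse function theorem, and a compactness
argument upgrades injectivity on `K` to injectivity on a neighbourhood of `K`.
-/

open Set Filter Topology

theorem HasStrictDerivAt.exists_mem_nhds_injOn {𝕜 : Type*} [NontriviallyNormedField 𝕜]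
    [CompleteSpace 𝕜] {f : 𝕜 → 𝕜} {f' a : 𝕜} (hf : HasStrictDerivAt f f' a) (hf' : f' ≠ 0) :
    ∃ s ∈ 𝓝 a, InjOn f s :=
  ⟨_, hf.eventually_left_inverse hf', fun x (hx : _ = x) y (hy : _ = y) hxy => by
    rw [← hx, ← hy, hxy]⟩

theorem not_injOn_of_eventuallyEq_comp {X Y Z : Type*} [TopologicalSpace X] [TopologicalSpace Y]
    {f : X → Z} {g : Y → Z} {φ : X → Y} {x : X} (hφ : 𝓝 (φ x) ≤ map φ (𝓝 x))
    (hg : ∀ t ∈ 𝓝 (φ x), ¬InjOn g t) (hf : f =ᶠ[𝓝 x] g ∘ φ) {s : Set X} (hs : s ∈ 𝓝 x) :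
    ¬InjOn f s := by
  intro hinj
  apply hg (φ '' (s ∩ {z | f z = g (φ z)})) (hφ (image_mem_map (inter_mem hs hf)))
  rintro _ ⟨u, ⟨hus, hu : f u = _⟩, rfl⟩ _ ⟨v, ⟨hvs, hv : f v = _⟩, rfl⟩ huv
  rw [hinj hus hvs (by rw [hu, hv]; exact huv)]

theorem Complex.not_injOn_const_add_pow (c : ℂ) {n : ℕ} (hn : 2 ≤ n) {t : Set ℂ}
    (ht : t ∈ 𝓝 0) : ¬InjOn (fun w => c + w ^ n) t := by
  intro hinj
  have hζ := Complex.isPrimitiveRoot_exp n (by omega)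
  set ζ := Complex.exp (2 * Real.pi * Complex.I / n)
  have hζt : {w | ζ * w ∈ t} ∈ 𝓝 (0 : ℂ) :=
    ((continuous_const_mul ζ).tendsto' 0 0 (mul_zero ζ)).eventually ht
  obtain ⟨w, ⟨hwt, hζwt⟩, hw0⟩ :=
    (infinite_of_mem_nhds 0 (inter_mem ht hζt)).nontrivial.exists_ne 0
  have hw : w = ζ * w := hinj hwt hζwt (by simp only [mul_pow, hζ.pow_eq_one, one_mul])
  have : (ζ - 1) * w = 0 := by linear_combination -hw
  exact (mul_ne_zero (sub_ne_zero.mpr (hζ.ne_one (by omega))) hw0) this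

theorem AnalyticAt.exists_analyticAt_pow_eq {h : ℂ → ℂ} {z₀ : ℂ} (hh : AnalyticAt ℂ h z₀)
    (hz₀ : h z₀ ≠ 0) {n : ℕ} (hn : n ≠ 0) :
    ∃ q : ℂ → ℂ, AnalyticAt ℂ q z₀ ∧ q z₀ ≠ 0 ∧ ∀ z, q z ^ n = h z := by
  -- dividing by `h z₀` moves the values of `h` near `z₀` into the domain of the principal branch
  refine ⟨fun z => h z₀ ^ (n⁻¹ : ℂ) * (h z / h z₀) ^ (n⁻¹ : ℂ),
    analyticAt_const.mul ((hh.div_const).cpow analyticAt_const ?_), ?_, fun z => ?_⟩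
  · simp [hz₀]
  · simp [hz₀]
  · rw [mul_pow, Complex.cpow_nat_inv_pow _ hn, Complex.cpow_nat_inv_pow _ hn,
      mul_div_cancel₀ _ hz₀]

theorem AnalyticAt.exists_eventuallyEq_add_pow {f : ℂ → ℂ} {z₀ : ℂ} {n : ℕ}
    (hf : AnalyticAt ℂ f z₀) (hn : analyticOrderAt (f · - f z₀) z₀ = n) :
    ∃ φ : ℂ → ℂ, AnalyticAt ℂ φ z₀ ∧ φ z₀ = 0 ∧ deriv φ z₀ ≠ 0 ∧
      f =ᶠ[𝓝 z₀] fun z => f z₀ + φ z ^ n := by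
  have hg : AnalyticAt ℂ (f · - f z₀) z₀ := hf.sub analyticAt_const
  obtain ⟨h, hh, hz₀, hfh⟩ := (hg.analyticOrderAt_eq_natCast).mp hn
  have hn0 : n ≠ 0 := by
    rintro rfl
    exact hg.analyticOrderAt_eq_zero.mp hn (sub_self _)
  obtain ⟨q, hq, hqz₀, hqh⟩ := hh.exists_analyticAt_pow_eq hz₀ hn0
  have hφ' : HasDerivAt (fun z => (z - z₀) * q z) (q z₀) z₀ := by
    simpa using ((hasDerivAt_id z₀).sub_const z₀).fun_mul hq.differentiableAt.hasDerivAt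
  refine ⟨fun z => (z - z₀) * q z, (analyticAt_id.sub analyticAt_const).mul hq, by simp,
    hφ'.deriv ▸ hqz₀, hfh.mono fun z hz => ?_⟩
  show f z = f z₀ + ((z - z₀) * q z) ^ n
  rw [mul_pow, hqh, ← smul_eq_mul, ← hz, add_sub_cancel]

theorem AnalyticAt.two_le_analyticOrderAt_of_deriv_eq_zero {f : ℂ → ℂ} {z₀ : ℂ}
    (hf : AnalyticAt ℂ f z₀) (hd : deriv f z₀ = 0) : 2 ≤ analyticOrderAt (f · - f z₀) z₀ := by
  have : 1 ≤ analyticOrderAt (deriv f) z₀ :=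
    Order.one_le_iff_ne_zero.mpr fun h0 => hf.deriv.analyticOrderAt_eq_zero.mp h0 hd
  rw [← hf.analyticOrderAt_deriv_add_one]
  calc (2 : ℕ∞) = 1 + 1 := by norm_num
    _ ≤ analyticOrderAt (deriv f) z₀ + 1 := by gcongr

theorem AnalyticAt.not_injOn_of_deriv_eq_zero {f : ℂ → ℂ} {z₀ : ℂ} (hf : AnalyticAt ℂ f z₀)
    (hd : deriv f z₀ = 0) {s : Set ℂ} (hs : s ∈ 𝓝 z₀) : ¬InjOn f s := by
  intro hinj
  cases hord : analyticOrderAt (f · - f z₀) z₀ with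
  | top =>
    have hconst : ∀ᶠ z in 𝓝 z₀, f z = f z₀ := by
      simpa [sub_eq_zero] using analyticOrderAt_eq_top.mp hord
    obtain ⟨w, ⟨hws, hw⟩, hwz₀⟩ :=
      (infinite_of_mem_nhds z₀ (inter_mem hs hconst)).nontrivial.exists_ne z₀
    exact hwz₀ (hinj hws (mem_of_mem_nhds hs) hw)
  | coe n =>
    have hn : 2 ≤ n := by
      exact_mod_cast hord ▸ hf.two_le_analyticOrderAt_of_deriv_eq_zero hd
    obtain ⟨φ, hφ, hφz₀, hφ', hfφ⟩ := hf.exists_eventuallyEq_add_pow hord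
    refine not_injOn_of_eventuallyEq_comp (g := fun w => f z₀ + w ^ n)
      (hφ.hasStrictDerivAt.map_nhds_eq hφ').ge ?_ hfφ hs hinj
    rw [hφz₀]
    exact fun t ht => Complex.not_injOn_const_add_pow (f z₀) hn ht

/-- Let `f` be holomorphic on an open set `U ⊆ ℂ` and `K ⊆ U` compact. Then there is
no open set `V` with `K ⊆ V ⊆ U` on which `f` is injective if and only if either `f`
has a critical point on `K` (a point where the derivative vanishes) or the restriction
of `f` to `K` is not injective (or both). -/
theorem no_injective_nbhd_iff_critical_or_not_injOn (U : Set ℂ) (hU : IsOpen U)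
    (f : ℂ → ℂ) (hf : DifferentiableOn ℂ f U) (K : Set ℂ) (hK : IsCompact K)
    (hKU : K ⊆ U) :
    (¬ ∃ V : Set ℂ, IsOpen V ∧ K ⊆ V ∧ V ⊆ U ∧ Set.InjOn f V) ↔
      ((∃ z ∈ K, deriv f z = 0) ∨ ¬ Set.InjOn f K) := by
  have hfa : ∀ z ∈ K, AnalyticAt ℂ f z := fun z hz => hf.analyticOnNhd hU z (hKU hz)
  constructor
  · intro hno
    by_contra! h
    obtain ⟨hcrit, hinj⟩ := h
    obtain ⟨t, ht, hKt, hinjt⟩ := hinj.exists_isOpen_superset hK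
      (fun z hz => (hfa z hz).continuousAt)
      (fun z hz => (hfa z hz).hasStrictDerivAt.exists_mem_nhds_injOn (hcrit z hz))
    exact hno ⟨t ∩ U, ht.inter hU, subset_inter hKt hKU, inter_subset_right,
      hinjt.mono inter_subset_left⟩
  · rintro (⟨z, hzK, hdz⟩ | hninj) ⟨V, hVo, hKV, -, hVinj⟩
    · exact (hfa z hzK).not_injOn_of_deriv_eq_zero hdz (hVo.mem_nhds (hKV hzK)) hVinj
    · exact hninj (hVinj.mono hKV)
end

section
/- Let X and Y be nonempty, disjoint, compact, connected subsets of ℂ. Then at least one of them is contained in the unbounded connected component of the complement of the other: X is contained in the unbounded connected component of ℂ ∖ Y, or Y is contained in the unbounded connected component of ℂ ∖ X (or both). -/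
open Set Bornology

/-- The frontier of a connected component of an open set lies in the complement. -/
lemma frontier_connectedComponentIn_subset {α : Type*} [TopologicalSpace α]
    [LocallyConnectedSpace α] {F : Set α} (hF : IsOpen F) (x : α) :
    frontier (connectedComponentIn F x) ⊆ Fᶜ := by
  intro p hp
  by_contra hpF
  rw [Set.notMem_compl_iff] at hpF
  set U := connectedComponentIn F x with hU
  have hUopen : IsOpen U := hF.connectedComponentIn
  have hpU : p ∉ U := fun h => (hUopen.frontier_eq ▸ hp).2 h
  have hnhds : connectedComponentIn F p ∈ nhds p :=
    connectedComponentIn_mem_nhds (hF.mem_nhds hpF)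
  have hclos : p ∈ closure U := hp.1
  rcases mem_closure_iff_nhds.mp hclos _ hnhds with ⟨q, hq1, hq2⟩
  have h1 : connectedComponentIn F p = connectedComponentIn F q :=
    connectedComponentIn_eq hq1
  have h2 : connectedComponentIn F x = connectedComponentIn F q :=
    connectedComponentIn_eq hq2
  exact hpU (by rw [hU, h2, ← h1]; exact mem_connectedComponentIn hpF)

/-- If `X` and `Y` are nonempty, disjoint, compact, connected subsets of `ℂ`, then at
least one of them lies in the unbounded connected component of the complement of the
other. -/
theorem continuum_in_unbounded_component_of_other (X Y : Set ℂ)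
    (hXne : X.Nonempty) (hYne : Y.Nonempty) (hdisj : Disjoint X Y)
    (hXcomp : IsCompact X) (hYcomp : IsCompact Y)
    (hXconn : IsConnected X) (hYconn : IsConnected Y) :
    (∃ z ∈ Yᶜ, ¬ Bornology.IsBounded (connectedComponentIn Yᶜ z) ∧
        X ⊆ connectedComponentIn Yᶜ z) ∨
    (∃ z ∈ Xᶜ, ¬ Bornology.IsBounded (connectedComponentIn Xᶜ z) ∧
        Y ⊆ connectedComponentIn Xᶜ z) := by
  obtain ⟨x, hx⟩ := hXne
  obtain ⟨y, hy⟩ := hYne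
  have hXY : X ⊆ Yᶜ := Set.subset_compl_iff_disjoint_right.mpr hdisj
  have hYX : Y ⊆ Xᶜ := Set.subset_compl_iff_disjoint_left.mpr hdisj
  have hxYc : x ∈ Yᶜ := hXY hx
  have hyXc : y ∈ Xᶜ := hYX hy
  set U := connectedComponentIn Yᶜ x with hUdef
  set V := connectedComponentIn Xᶜ y with hVdef
  have hXsub : X ⊆ U := hXconn.isPreconnected.subset_connectedComponentIn hx hXY
  have hYsub : Y ⊆ V := hYconn.isPreconnected.subset_connectedComponentIn hy hYX
  by_cases hUb : Bornology.IsBounded U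
  · by_cases hVb : Bornology.IsBounded V
    · exfalso
      -- Both components bounded: show `U ∪ V` is clopen, nonempty, bounded; contradiction.
      have hYopen : IsOpen Yᶜ := hYcomp.isClosed.isOpen_compl
      have hXopen : IsOpen Xᶜ := hXcomp.isClosed.isOpen_compl
      have hUopen : IsOpen U := hYopen.connectedComponentIn
      have hVopen : IsOpen V := hXopen.connectedComponentIn
      have hfU : frontier U ⊆ Y := by
        have := frontier_connectedComponentIn_subset hYopen x
        simpa using this
      have hfV : frontier V ⊆ X := by
        have := frontier_connectedComponentIn_subset hXopen y
        simpa using this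
      have hclU : closure U ⊆ U ∪ V := by
        rw [closure_eq_self_union_frontier]
        exact Set.union_subset Set.subset_union_left ((hfU.trans hYsub).trans Set.subset_union_right)
      have hclV : closure V ⊆ U ∪ V := by
        rw [closure_eq_self_union_frontier]
        refine Set.union_subset (Set.subset_union_right) ((hfV.trans hXsub).trans Set.subset_union_left)
      have hclopen : IsClopen (U ∪ V) := by
        constructor
        · rw [← closure_subset_iff_isClosed]
          rw [closure_union]
          exact Set.union_subset hclU hclV
        · exact hUopen.union hVopen
      rcases isClopen_iff.mp hclopen with h0 | huniv
      · have : x ∈ U := mem_connectedComponentIn hxYc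
        exact absurd (h0 ▸ Set.mem_union_left V this) (Set.notMem_empty x)
      · have : Bornology.IsBounded (Set.univ : Set ℂ) := huniv ▸ hUb.union hVb
        exact NormedSpace.unbounded_univ ℝ ℂ this
    · exact Or.inr ⟨y, hyXc, hVb, hYsub⟩
  · exact Or.inl ⟨x, hxYc, hUb, hXsub⟩
end
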